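/- The operator T_λ maps K into K, is continuous on K, and maps bounded subsets of K to relatively compact subsets of X (i.e., T_λ : K → K is a compact continuous operator). -/

import Mathlib

open Set Filter

/-- The Banach space `X = C([0,1]) × C([0,1])`. -/
abbrev XCM := C(Set.Icc (0:ℝ) 1, ℝ) × C(Set.Icc (0:ℝ) 1, ℝ)

/-- The cone `K ⊆ X`:
`K = {(v₁,v₂) : vᵢ ≥ 0 and min_{1/4 ≤ t ≤ 3/4} vᵢ(t) ≥ (1/4)‖vᵢ‖_∞, i = 1,2}`. -/
def coneCM : Set XCM :=
  {p | (∀ t, 0 ≤ p.1 t) ∧ (∀ t, 0 ≤ p.2 t) ∧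
       (∀ t : Set.Icc (0:ℝ) 1, 1/4 ≤ (t:ℝ) → (t:ℝ) ≤ 3/4 → (1/4) * ‖p.1‖ ≤ p.1 t) ∧
       (∀ t : Set.Icc (0:ℝ) 1, 1/4 ≤ (t:ℝ) → (t:ℝ) ≤ 3/4 → (1/4) * ‖p.2‖ ≤ p.2 t)}

/-- Extension of a continuous function on `[0,1]` to `ℝ` by projection onto `[0,1]`. -/
noncomputable def extCM (v : C(Set.Icc (0:ℝ) 1, ℝ)) : ℝ → ℝ :=
  fun t => v (Set.projIcc 0 1 zero_le_one t)

/-!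
Write `G_v(s) = (λ ∫₀ˢ N τ^{N-1} f(v(τ)) dτ)^{1/N}`, so that `T¹_λ(v)(r) = ∫ᵣ¹ G_v`.
On `K` the function `G_v` is nonnegative and nondecreasing, hence `T¹_λ(v)` is nonincreasing with
sup norm `T¹_λ(v)(0)`; comparing `∫₀ᵗ G_v ≤ t G_v(t)` with `∫ₜ¹ G_v ≥ (1 - t) G_v(t)` gives
`T¹_λ(v)(t) ≥ (1 - t) T¹_λ(v)(0) ≥ ¼ ‖T¹_λ(v)‖` for `t ≤ 3/4`, so `T_λ` preserves `K`.
On `K` nothing changes if `f` is replaced by the continuous function `x ↦ f(max x 0)`; then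
`(v, r) ↦ T¹_λ(v)(r)` is jointly continuous, and currying it gives continuity of `T_λ`.
On a bounded part of `K`, `G_v` is bounded by a constant `M`, so every `T¹_λ(v)` is bounded by `M`
and `M`-Lipschitz, and Arzelà–Ascoli gives relative compactness.
-/

open MeasureTheory intervalIntegral

/- No integrability of `u` is assumed: `T_λ` has to be defined on all of `X`, where the source
term may fail to be integrable. -/
theorem continuousOn_integral_comp_primitive {φ : ℝ → ℝ} (hφ : Continuous φ) (hφ0 : φ 0 = 0)
    (u : ℝ → ℝ) {a b : ℝ} (hab : a ≤ b) :
    ContinuousOn (fun r => ∫ s in r..b, φ (∫ τ in a..s, u τ)) (Icc a b) := by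
  set G : ℝ → ℝ := fun s => φ (∫ τ in a..s, u τ)
  by_cases hG : IntegrableOn G (Icc a b)
  · rw [← uIcc_of_le hab] at hG ⊢
    exact continuousOn_primitive_interval_left hG
  refine continuousOn_const (c := (0 : ℝ)).congr fun r hr => ?_
  by_cases hu : IntervalIntegrable u volume a r
  · -- `G` is continuous on `[a, r]`, so its non-integrability sits in `[r, b]`
    refine integral_undef fun hrb => hG ?_
    have hP : ContinuousOn (fun s => ∫ τ in a..s, u τ) (uIcc a r) :=
      continuousOn_primitive_interval ((intervalIntegrable_iff_integrableOn_Icc_of_le hr.1).1 hu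
        |>.mono_set (by rw [uIcc_of_le hr.1]))
    exact (intervalIntegrable_iff_integrableOn_Icc_of_le hab).1
      ((hφ.comp_continuousOn hP).intervalIntegrable.trans hrb)
  · -- beyond `r` the primitive is the junk value `0`
    have hG0 : ∀ s ∈ Ioc r b, G s = 0 := fun s hs => by
      rw [show G s = φ (∫ τ in a..s, u τ) from rfl, integral_undef fun h =>
        hu (h.mono_set (uIcc_subset_uIcc_left ⟨by simp [hr.1], by simp [hs.1.le]⟩)), hφ0]
    rw [integral_of_le hr.2, setIntegral_eq_zero_of_forall_eq_zero hG0]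

theorem mul_integral_le_mul_integral_of_monotoneOn {G : ℝ → ℝ} {a b t : ℝ}
    (hG : MonotoneOn G (Icc a b)) (ht : t ∈ Icc a b) :
    (b - t) * ∫ s in a..b, G s ≤ (b - a) * ∫ s in t..b, G s := by
  have hab : a ≤ b := ht.1.trans ht.2
  have hint : ∀ {x y}, x ∈ Icc a b → y ∈ Icc a b → IntervalIntegrable G volume x y :=
    fun hx hy => (uIcc_of_le hab ▸ hG).intervalIntegrable.mono_set
      (uIcc_subset_uIcc (by rwa [uIcc_of_le hab]) (by rwa [uIcc_of_le hab]))
  have ha : a ∈ Icc a b := left_mem_Icc.2 hab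
  have hb : b ∈ Icc a b := right_mem_Icc.2 hab
  have hleft : ∫ s in a..t, G s ≤ (t - a) * G t := by
    simpa using integral_mono_on ht.1 (hint ha ht) intervalIntegrable_const
      fun s hs => hG ⟨hs.1, hs.2.trans ht.2⟩ ht hs.2
  have hright : (b - t) * G t ≤ ∫ s in t..b, G s := by
    simpa using integral_mono_on ht.2 intervalIntegrable_const (hint ht hb)
      fun s hs => hG ht ⟨ht.1.trans hs.1, hs.2⟩ hs.1
  rw [← integral_add_adjacent_intervals (hint ha ht) (hint ht hb)]
  nlinarith [mul_le_mul_of_nonneg_left hleft (sub_nonneg.2 ht.2),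
    mul_le_mul_of_nonneg_left hright (sub_nonneg.2 ht.1)]

def boundedLipschitz (X : Type*) [PseudoMetricSpace X] (M : NNReal) : Set C(X, ℝ) :=
  {h | (∀ x, |h x| ≤ M) ∧ LipschitzWith M h}

theorem isCompact_closure_boundedLipschitz (X : Type*) [PseudoMetricSpace X] [CompactSpace X]
    (M : NNReal) : IsCompact (closure (boundedLipschitz X M)) := by
  let E := (ContinuousMap.isometryEquivBoundedOfCompact X ℝ).toHomeomorph
  have hE : IsCompact (closure (E '' boundedLipschitz X M)) :=
    BoundedContinuousFunction.arzela_ascoli (Icc (-(M:ℝ)) M) isCompact_Icc _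
      (by rintro _ x ⟨h, hh, rfl⟩; exact abs_le.1 (hh.1 x))
      (Metric.equicontinuous_of_continuity_modulus (fun d => M * d)
        (by simpa using (continuous_const_mul (M:ℝ)).tendsto 0) _
        (by rintro x y ⟨_, h, hh, rfl⟩; exact hh.2.dist_le_mul x y))
  rwa [← E.isCompact_preimage, E.preimage_closure, E.preimage_image] at hE

noncomputable section RadialOperator

variable {c e : ℝ} {u : ℝ → ℝ}

def radialProfile (c e : ℝ) (u : ℝ → ℝ) (s : ℝ) : ℝ := (c * ∫ τ in (0:ℝ)..s, u τ) ^ e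

def radialOp (c : ℝ) {e : ℝ} (he : 0 < e) (u : ℝ → ℝ) : C(Icc (0:ℝ) 1, ℝ) :=
  ⟨fun r => ∫ s in (r:ℝ)..1, radialProfile c e u s,
    (continuousOn_integral_comp_primitive (φ := fun x => (c * x) ^ e)
      ((Real.continuous_rpow_const he.le).comp (continuous_const_mul c))
      (by simp [Real.zero_rpow he.ne']) u zero_le_one).domRestrict⟩

theorem continuousOn_radialProfile (c : ℝ) (he : 0 ≤ e) (hu : IntervalIntegrable u volume 0 1) :
    ContinuousOn (radialProfile c e u) (Icc 0 1) := by
  have hP := continuousOn_primitive_interval ((intervalIntegrable_iff' (μ := volume)).1 hu)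
  rw [uIcc_of_le zero_le_one] at hP
  exact (Real.continuous_rpow_const he).comp_continuousOn (hP.const_smul c)

theorem radialProfile_nonneg (hc : 0 ≤ c) (hu0 : ∀ τ ∈ Icc (0:ℝ) 1, 0 ≤ u τ) {s : ℝ}
    (hs : s ∈ Icc (0:ℝ) 1) : 0 ≤ radialProfile c e u s :=
  Real.rpow_nonneg
    (mul_nonneg hc (integral_nonneg hs.1 fun τ hτ => hu0 τ ⟨hτ.1, hτ.2.trans hs.2⟩)) e

theorem monotoneOn_radialProfile (hc : 0 ≤ c) (he : 0 ≤ e) (hu0 : ∀ τ ∈ Icc (0:ℝ) 1, 0 ≤ u τ)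
    (hu : IntervalIntegrable u volume 0 1) : MonotoneOn (radialProfile c e u) (Icc 0 1) :=
  fun s hs t ht hst => Real.rpow_le_rpow
    (mul_nonneg hc (integral_nonneg hs.1 fun τ hτ => hu0 τ ⟨hτ.1, hτ.2.trans hs.2⟩))
    (mul_le_mul_of_nonneg_left (integral_mono_interval le_rfl hs.1 hst
      (ae_restrict_of_forall_mem measurableSet_Ioc fun τ hτ => hu0 τ ⟨hτ.1.le, hτ.2.trans ht.2⟩)
      (hu.mono_set (uIcc_subset_uIcc_left ⟨by simp [ht.1], by simp [ht.2]⟩))) hc) he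

theorem abs_radialProfile_le (hc : 0 ≤ c) (he : 0 ≤ e) {D : ℝ}
    (hD : ∀ τ ∈ Icc (0:ℝ) 1, |u τ| ≤ D) {s : ℝ} (hs : s ∈ Icc (0:ℝ) 1) :
    |radialProfile c e u s| ≤ (c * D) ^ e := by
  have hD0 : 0 ≤ D := (abs_nonneg _).trans (hD 0 (left_mem_Icc.2 zero_le_one))
  have hP : |∫ τ in (0:ℝ)..s, u τ| ≤ D := by
    calc |∫ τ in (0:ℝ)..s, u τ| ≤ D * |s - 0| :=
          intervalIntegral.norm_integral_le_of_norm_le_const (f := u) fun τ hτ =>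
            hD τ ⟨(uIoc_of_le hs.1 ▸ hτ).1.le, (uIoc_of_le hs.1 ▸ hτ).2.trans hs.2⟩
      _ ≤ D := by rw [sub_zero, abs_of_nonneg hs.1]; nlinarith [hs.2]
  calc |radialProfile c e u s| ≤ |c * ∫ τ in (0:ℝ)..s, u τ| ^ e := Real.abs_rpow_le_abs_rpow _ _
    _ ≤ (c * D) ^ e := Real.rpow_le_rpow (abs_nonneg _)
        (by rw [abs_mul, abs_of_nonneg hc]; exact mul_le_mul_of_nonneg_left hP hc) he

theorem radialOp_apply (he : 0 < e) (r : Icc (0:ℝ) 1) :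
    radialOp c he u r = ∫ s in (r:ℝ)..1, radialProfile c e u s := rfl

theorem intervalIntegrable_radialProfile (he : 0 ≤ e) (hu : IntervalIntegrable u volume 0 1)
    {r r' : ℝ} (hr : r ∈ Icc (0:ℝ) 1) (hr' : r' ∈ Icc (0:ℝ) 1) :
    IntervalIntegrable (radialProfile c e u) volume r r' :=
  ((continuousOn_radialProfile c he hu).mono (uIcc_subset_Icc hr hr')).intervalIntegrable

variable (he : 0 < e)

theorem radialOp_nonneg (hc : 0 ≤ c) (hu0 : ∀ τ ∈ Icc (0:ℝ) 1, 0 ≤ u τ) (r : Icc (0:ℝ) 1) :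
    0 ≤ radialOp c he u r :=
  integral_nonneg r.2.2 fun _ hs => radialProfile_nonneg hc hu0 ⟨r.2.1.trans hs.1, hs.2⟩

theorem norm_radialOp_le (hc : 0 ≤ c) (hu0 : ∀ τ ∈ Icc (0:ℝ) 1, 0 ≤ u τ)
    (hu : IntervalIntegrable u volume 0 1) :
    ‖radialOp c he u‖ ≤ ∫ s in (0:ℝ)..1, radialProfile c e u s := by
  have hG0 : ∀ s ∈ Icc (0:ℝ) 1, 0 ≤ radialProfile c e u s := fun _ => radialProfile_nonneg hc hu0
  refine (ContinuousMap.norm_le _ (integral_nonneg zero_le_one hG0)).2 fun r => ?_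
  rw [Real.norm_eq_abs, abs_of_nonneg (radialOp_nonneg he hc hu0 r)]
  exact integral_mono_interval r.2.1 r.2.2 le_rfl
    (ae_restrict_of_forall_mem measurableSet_Ioc fun s hs => hG0 s (Ioc_subset_Icc_self hs))
    (intervalIntegrable_radialProfile he.le hu (left_mem_Icc.2 zero_le_one)
      (right_mem_Icc.2 zero_le_one))

theorem quarter_mul_norm_le_radialOp (hc : 0 ≤ c) (hu0 : ∀ τ ∈ Icc (0:ℝ) 1, 0 ≤ u τ)
    (hu : IntervalIntegrable u volume 0 1) {t : Icc (0:ℝ) 1} (ht : (t:ℝ) ≤ 3/4) :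
    1/4 * ‖radialOp c he u‖ ≤ radialOp c he u t :=
  calc 1/4 * ‖radialOp c he u‖ ≤ (1 - t) * ∫ s in (0:ℝ)..1, radialProfile c e u s :=
        mul_le_mul (by linarith) (norm_radialOp_le he hc hu0 hu) (norm_nonneg _)
          (by linarith [t.2.2])
    _ ≤ (1 - 0) * radialOp c he u t :=
        mul_integral_le_mul_integral_of_monotoneOn
          (monotoneOn_radialProfile hc he.le hu0 hu) t.2
    _ = radialOp c he u t := by rw [sub_zero, one_mul]

theorem abs_radialOp_le {M : ℝ} (hM : ∀ s ∈ Icc (0:ℝ) 1, |radialProfile c e u s| ≤ M)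
    (r : Icc (0:ℝ) 1) : |radialOp c he u r| ≤ M := by
  have hM0 : 0 ≤ M := (abs_nonneg _).trans (hM 0 (left_mem_Icc.2 zero_le_one))
  calc |radialOp c he u r| ≤ M * |1 - (r:ℝ)| :=
        intervalIntegral.norm_integral_le_of_norm_le_const (f := radialProfile c e u) fun s hs =>
          hM s (uIcc_subset_Icc r.2 (right_mem_Icc.2 zero_le_one) (uIoc_subset_uIcc hs))
    _ ≤ M := by
        rw [abs_of_nonneg (by linarith [r.2.2])]
        nlinarith [r.2.1]

theorem lipschitzWith_radialOp (hu : IntervalIntegrable u volume 0 1) {M : NNReal}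
    (hM : ∀ s ∈ Icc (0:ℝ) 1, |radialProfile c e u s| ≤ M) :
    LipschitzWith M (radialOp c he u) := by
  refine LipschitzWith.of_dist_le_mul fun r r' => ?_
  have h1 : (1:ℝ) ∈ Icc (0:ℝ) 1 := right_mem_Icc.2 zero_le_one
  rw [Real.dist_eq, Subtype.dist_eq, Real.dist_eq, abs_sub_comm (r:ℝ), radialOp_apply,
    radialOp_apply, ← integral_add_adjacent_intervals
      (intervalIntegrable_radialProfile he.le hu r.2 r'.2)
      (intervalIntegrable_radialProfile he.le hu r'.2 h1), add_sub_cancel_right]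
  exact intervalIntegral.norm_integral_le_of_norm_le_const (f := radialProfile c e u) fun s hs =>
    hM s (uIcc_subset_Icc r.2 r'.2 (uIoc_subset_uIcc hs))

end RadialOperator

theorem continuous_radialOp {X : Type*} [TopologicalSpace X] (c : ℝ) {e : ℝ} (he : 0 < e)
    {u : X → ℝ → ℝ} (hu : Continuous (Function.uncurry u)) :
    Continuous fun x => radialOp c he (u x) := by
  have hG : Continuous fun q : X × ℝ => radialProfile c e (u q.1) q.2 :=
    (Real.continuous_rpow_const he.le).comp
      (continuous_const.mul (continuous_parametric_primitive_of_continuous hu))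
  have hS : Continuous fun q : X × Icc (0:ℝ) 1 => radialOp c he (u q.1) q.2 := by
    simp_rw [radialOp_apply, integral_symm (1:ℝ)]
    exact (continuous_parametric_intervalIntegral_of_continuous
      (f := fun (q : X × Icc (0:ℝ) 1) s => radialProfile c e (u q.1) s)
      (hG.comp (continuous_fst.fst.prodMk continuous_snd))
      (continuous_subtype_val.comp continuous_snd)).neg
  exact (ContinuousMap.curry ⟨_, hS⟩).continuous

section RadialSource

variable {F : ℝ → ℝ} {N : ℕ} {v : C(Icc (0:ℝ) 1, ℝ)}

noncomputable def radialSource (F : ℝ → ℝ) (N : ℕ) (v : C(Icc (0:ℝ) 1, ℝ)) (τ : ℝ) : ℝ :=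
  N * τ ^ (N - 1) * F (extCM v τ)

theorem continuous_radialSource (hF : ContinuousOn F (Ici 0)) (hv : ∀ t, 0 ≤ v t) :
    Continuous (radialSource F N v) :=
  (continuous_const.mul (continuous_pow _)).mul
    (hF.comp_continuous (v.continuous.comp continuous_projIcc) fun _ => hv _)

theorem radialSource_nonneg (hF0 : ∀ x, 0 ≤ x → 0 ≤ F x) (hv : ∀ t, 0 ≤ v t) :
    ∀ τ ∈ Icc (0:ℝ) 1, 0 ≤ radialSource F N v τ := fun _ hτ =>
  mul_nonneg (mul_nonneg (Nat.cast_nonneg _) (pow_nonneg hτ.1 _)) (hF0 _ (hv _))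

theorem abs_radialSource_le {C R : ℝ} (hC : ∀ x ∈ Icc 0 R, ‖F x‖ ≤ C) (hv : ∀ t, 0 ≤ v t)
    (hvR : ‖v‖ ≤ R) : ∀ τ ∈ Icc (0:ℝ) 1, |radialSource F N v τ| ≤ N * C := fun τ hτ => by
  have hweight : |(N:ℝ) * τ ^ (N - 1)| ≤ N := by
    rw [abs_of_nonneg (mul_nonneg (Nat.cast_nonneg _) (pow_nonneg hτ.1 _))]
    exact mul_le_of_le_one_right (Nat.cast_nonneg _) (pow_le_one₀ hτ.1 hτ.2)
  rw [radialSource, abs_mul]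
  have hvτ : extCM v τ ∈ Icc 0 R :=
    ⟨hv _, (le_abs_self _).trans ((v.norm_coe_le_norm _).trans hvR)⟩
  exact mul_le_mul hweight (hC _ hvτ) (abs_nonneg _) (Nat.cast_nonneg _)

theorem continuousOn_radialOp_radialSource (c : ℝ) {e : ℝ} (he : 0 < e)
    (hF : ContinuousOn F (Ici 0)) :
    ContinuousOn (fun v => radialOp c he (radialSource F N v)) {v | ∀ t, 0 ≤ v t} := by
  set F' : ℝ → ℝ := fun x => F (max x 0)
  have hF' : Continuous F' := hF.comp_continuous (continuous_id.max continuous_const)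
    fun x => le_max_right x 0
  have hsource : Continuous (Function.uncurry fun v => radialSource F' N v) :=
    (continuous_const.mul (continuous_snd.pow _)).mul
      (hF'.comp (continuous_eval.comp (continuous_fst.prodMk
        ((continuous_projIcc (h := zero_le_one)).comp continuous_snd))))
  refine (continuous_radialOp c he hsource).continuousOn.congr fun v hv => ?_
  have hvF : radialSource F N v = radialSource F' N v := funext fun τ => by
    simp only [radialSource, F', extCM, max_eq_left (hv _)]
  rw [hvF]

theorem exists_forall_radialOp_radialSource_mem_boundedLipschitz {c e : ℝ} (hc : 0 ≤ c)
    (he : 0 < e) (hF : ContinuousOn F (Ici 0)) (N : ℕ) (R : ℝ) :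
    ∃ M, ∀ v, (∀ t, 0 ≤ v t) → ‖v‖ ≤ R →
      radialOp c he (radialSource F N v) ∈ boundedLipschitz (Icc (0:ℝ) 1) M := by
  obtain ⟨C, hC⟩ := isCompact_Icc.exists_bound_of_continuousOn (hF.mono Icc_subset_Ici_self)
  refine ⟨((c * (N * C)) ^ e).toNNReal, fun v hv hvR => ?_⟩
  have hG : ∀ s ∈ Icc (0:ℝ) 1,
      |radialProfile c e (radialSource F N v) s| ≤ ((c * (N * C)) ^ e).toNNReal := fun s hs =>
    (abs_radialProfile_le hc he.le (abs_radialSource_le hC hv hvR) hs).trans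
      (Real.le_coe_toNNReal _)
  exact ⟨abs_radialOp_le he hG,
    lipschitzWith_radialOp he ((continuous_radialSource hF hv).intervalIntegrable _ _) hG⟩

end RadialSource

/-- Lemma 2: the operator `T_λ = (T¹_λ, T²_λ)`, given by
`T¹_λ(v₁,v₂)(r) = ∫_r^1 (λ ∫_0^s N τ^{N-1} f(v₂(τ)) dτ)^{1/N} ds` and
`T²_λ(v₁,v₂)(r) = ∫_r^1 (λ ∫_0^s N τ^{N-1} g(v₁(τ)) dτ)^{1/N} ds`,
maps `K` into `K`, is continuous on `K`, and maps bounded subsets of `K` to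
relatively compact subsets of `X`, i.e. `T_λ : K → K` is compact and continuous. -/
theorem operator_compact_continuous
    (N : ℕ) (hN : 1 ≤ N) (f g : ℝ → ℝ)
    (hfc : ContinuousOn f (Ici 0)) (hgc : ContinuousOn g (Ici 0))
    (hfnn : ∀ x, 0 ≤ x → 0 ≤ f x) (hgnn : ∀ x, 0 ≤ x → 0 ≤ g x)
    (lam : ℝ) (hlam : 0 < lam) :
    ∃ T : XCM → XCM,
      (∀ p : XCM, ∀ r : Set.Icc (0:ℝ) 1,
        (T p).1 r =
          ∫ s in (r:ℝ)..1,
            (lam * ∫ τ in (0:ℝ)..s, (N:ℝ) * τ ^ (N - 1) * f (extCM p.2 τ)) ^ ((N:ℝ)⁻¹) ∧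
        (T p).2 r =
          ∫ s in (r:ℝ)..1,
            (lam * ∫ τ in (0:ℝ)..s, (N:ℝ) * τ ^ (N - 1) * g (extCM p.1 τ)) ^ ((N:ℝ)⁻¹)) ∧
      MapsTo T coneCM coneCM ∧
      ContinuousOn T coneCM ∧
      (∀ B ⊆ coneCM, Bornology.IsBounded B → IsCompact (closure (T '' B))) := by
  have he : 0 < (N:ℝ)⁻¹ := inv_pos.2 (by exact_mod_cast hN)
  refine ⟨fun p => (radialOp lam he (radialSource f N p.2), radialOp lam he (radialSource g N p.1)),
    fun p r => ⟨rfl, rfl⟩, ?_, ?_, ?_⟩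
  · rintro p ⟨hp₁, hp₂, -, -⟩
    have hu₁ := (continuous_radialSource (N := N) hfc hp₂).intervalIntegrable (μ := volume) 0 1
    have hu₂ := (continuous_radialSource (N := N) hgc hp₁).intervalIntegrable (μ := volume) 0 1
    exact ⟨radialOp_nonneg he hlam.le (radialSource_nonneg hfnn hp₂),
      radialOp_nonneg he hlam.le (radialSource_nonneg hgnn hp₁),
      fun _ _ ht => quarter_mul_norm_le_radialOp he hlam.le (radialSource_nonneg hfnn hp₂) hu₁ ht,
      fun _ _ ht => quarter_mul_norm_le_radialOp he hlam.le (radialSource_nonneg hgnn hp₁) hu₂ ht⟩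
  · exact ((continuousOn_radialOp_radialSource lam he hfc).comp continuous_snd.continuousOn
      fun p hp => hp.2.1).prodMk
      ((continuousOn_radialOp_radialSource lam he hgc).comp continuous_fst.continuousOn
        fun p hp => hp.1)
  · intro B hB hBdd
    obtain ⟨R, hR⟩ := isBounded_iff_forall_norm_le.1 hBdd
    obtain ⟨M₁, hM₁⟩ := exists_forall_radialOp_radialSource_mem_boundedLipschitz hlam.le he hfc N R
    obtain ⟨M₂, hM₂⟩ := exists_forall_radialOp_radialSource_mem_boundedLipschitz hlam.le he hgc N R
    refine ((isCompact_closure_boundedLipschitz _ M₁).prod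
      (isCompact_closure_boundedLipschitz _ M₂)).of_isClosed_subset isClosed_closure ?_
    rw [← closure_prod_eq]
    refine closure_mono ?_
    rintro _ ⟨p, hp, rfl⟩
    exact ⟨hM₁ p.2 (hB hp).2.1 ((norm_snd_le p).trans (hR p hp)),
      hM₂ p.1 (hB hp).1 ((norm_fst_le p).trans (hR p hp))⟩
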